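/- Let F₄ := (S_C⁻¹⊗id)(E) ∈ C⊗C, viewed in A⊗A. Then (1⊗y)·F₄ = F₄·(y⊗1) for all y ∈ C (so the map a⊗b ↦ (1⊗b)F₄(a⊗1) satisfies (1⊗by)F₄(a⊗1) = (1⊗b)F₄(ya⊗1) and descends to the balanced quotient A⊗^tA := (A⊗A)/J^t), and for all a, b ∈ A the element (1⊗b)F₄(a⊗1) − a⊗b lies in J^t := span_ℂ{a'⊗b'y − ya'⊗b' : y ∈ C, a', b' ∈ A}. -/
import Mathlib


open scoped TensorProduct

set_option synthInstance.maxHeartbeats 1000000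
set_option maxHeartbeats 1000000

/-- The canonical inclusion `B ⊗ C → A ⊗ A` for subalgebras `B, C ⊆ A`. -/
noncomputable def incl {A : Type*} [Ring A] [Algebra ℂ A] (B C : Subalgebra ℂ A) :
    (↥B ⊗[ℂ] ↥C) →ₗ[ℂ] (A ⊗[ℂ] A) :=
  TensorProduct.map B.val.toLinearMap C.val.toLinearMap

/-- The linear map `μ_{S_B} : B ⊗ C → C`, `b ⊗ c ↦ S_B(b)·c`. -/
noncomputable def muSB {A : Type*} [Ring A] [Algebra ℂ A] {B C : Subalgebra ℂ A}
    (SB : ↥B ≃ₗ[ℂ] ↥C) : (↥B ⊗[ℂ] ↥C) →ₗ[ℂ] ↥C :=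
  TensorProduct.lift (LinearMap.mul ℂ ↥C) ∘ₗ TensorProduct.map SB.toLinearMap LinearMap.id

/-- The linear map `μ_{S_C} : B ⊗ C → B`, `b ⊗ c ↦ b·S_C(c)`. -/
noncomputable def muSC {A : Type*} [Ring A] [Algebra ℂ A] {B C : Subalgebra ℂ A}
    (SC : ↥C ≃ₗ[ℂ] ↥B) : (↥B ⊗[ℂ] ↥C) →ₗ[ℂ] ↥B :=
  TensorProduct.lift (LinearMap.mul ℂ ↥B) ∘ₗ TensorProduct.map LinearMap.id SC.toLinearMap

/-- `F₄ := (S_C⁻¹⊗id)(E) ∈ C⊗C` viewed in `A⊗A`. -/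
noncomputable def F4 {A : Type*} [Ring A] [Algebra ℂ A] {B C : Subalgebra ℂ A}
    (SC : ↥C ≃ₗ[ℂ] ↥B) (E : ↥B ⊗[ℂ] ↥C) : A ⊗[ℂ] A :=
  incl C C (TensorProduct.map SC.symm.toLinearMap LinearMap.id E)

/-- `(1⊗y)·F₄ = F₄·(y⊗1)` for all `y ∈ C`, and for all `a, b ∈ A` the element
`(1⊗b)F₄(a⊗1) − a⊗b` lies in the balancing subspace `Jᵗ`. -/
theorem stmt15 {A : Type*} [Ring A] [Algebra ℂ A] (B C : Subalgebra ℂ A)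
    (hcomm : ∀ (x : ↥B) (y : ↥C), (x : A) * (y : A) = (y : A) * (x : A))
    (SB : ↥B ≃ₗ[ℂ] ↥C) (hSBmul : ∀ x x' : ↥B, SB (x * x') = SB x' * SB x)
    (hSBone : SB 1 = 1)
    (SC : ↥C ≃ₗ[ℂ] ↥B) (hSCmul : ∀ y y' : ↥C, SC (y * y') = SC y' * SC y)
    (hSCone : SC 1 = 1)
    (E : ↥B ⊗[ℂ] ↥C) (hEidem : E * E = E)
    (hE1 : ∀ x : ↥B, E * (x ⊗ₜ[ℂ] (1 : ↥C)) = E * ((1 : ↥B) ⊗ₜ[ℂ] SB x))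
    (hE2 : ∀ y : ↥C, ((1 : ↥B) ⊗ₜ[ℂ] y) * E = (SC y ⊗ₜ[ℂ] (1 : ↥C)) * E)
    (hn1 : muSB SB E = 1) (hn2 : muSC SC E = 1) :
    (∀ y : ↥C,
      ((1 : A) ⊗ₜ[ℂ] (y : A)) * F4 SC E = F4 SC E * ((y : A) ⊗ₜ[ℂ] (1 : A))) ∧
    (∀ a b : A,
      ((1 : A) ⊗ₜ[ℂ] b) * F4 SC E * (a ⊗ₜ[ℂ] (1 : A)) - a ⊗ₜ[ℂ] b ∈
        Submodule.span ℂ {z : A ⊗[ℂ] A |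
          ∃ (y : ↥C) (a' b' : A),
            z = a' ⊗ₜ[ℂ] (b' * (y : A)) - ((y : A) * a') ⊗ₜ[ℂ] b'}) := by
  have hsymm : ∀ u v : ↥B, SC.symm (u * v) = SC.symm v * SC.symm u := by
    intro u v
    apply SC.injective
    simp [hSCmul]
  set Φ : (↥B ⊗[ℂ] ↥C) →ₗ[ℂ] (A ⊗[ℂ] A) :=
    incl C C ∘ₗ TensorProduct.map SC.symm.toLinearMap LinearMap.id with hΦ
  have hF4 : F4 SC E = Φ E := rfl
  constructor
  · intro y
    have h1 : ∀ z : ↥B ⊗[ℂ] ↥C,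
        Φ (((1 : ↥B) ⊗ₜ[ℂ] y) * z) = ((1 : A) ⊗ₜ[ℂ] (y : A)) * Φ z := by
      intro z
      induction z using TensorProduct.induction_on with
      | zero => simp
      | tmul b c =>
          simp [hΦ, incl, Algebra.TensorProduct.tmul_mul_tmul]
      | add z₁ z₂ ih₁ ih₂ => simp [mul_add, ih₁, ih₂]
    have h2 : ∀ z : ↥B ⊗[ℂ] ↥C,
        Φ ((SC y ⊗ₜ[ℂ] (1 : ↥C)) * z) = Φ z * ((y : A) ⊗ₜ[ℂ] (1 : A)) := by
      intro z
      induction z using TensorProduct.induction_on with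
      | zero => simp
      | tmul b c =>
          simp [hΦ, incl, Algebra.TensorProduct.tmul_mul_tmul, hsymm]
      | add z₁ z₂ ih₁ ih₂ => simp [mul_add, add_mul, ih₁, ih₂]
    rw [hF4, ← h1, ← h2, hE2]
  · intro a b
    set J : Submodule ℂ (A ⊗[ℂ] A) :=
      Submodule.span ℂ {z : A ⊗[ℂ] A |
        ∃ (y : ↥C) (a' b' : A),
          z = a' ⊗ₜ[ℂ] (b' * (y : A)) - ((y : A) * a') ⊗ₜ[ℂ] b'} with hJ
    set ψ : (↥C ⊗[ℂ] ↥C) →ₗ[ℂ] A :=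
      LinearMap.mul' ℂ A ∘ₗ (TensorProduct.comm ℂ A A).toLinearMap ∘ₗ incl C C with hψ
    have key : ∀ z : ↥C ⊗[ℂ] ↥C,
        ((1 : A) ⊗ₜ[ℂ] b) * incl C C z * (a ⊗ₜ[ℂ] (1 : A)) - (ψ z * a) ⊗ₜ[ℂ] b ∈ J := by
      intro z
      induction z using TensorProduct.induction_on with
      | zero => simp
      | tmul u c =>
          apply Submodule.subset_span
          refine ⟨c, (u : A) * a, b, ?_⟩
          simp [hψ, incl, Algebra.TensorProduct.tmul_mul_tmul, mul_assoc]
      | add z₁ z₂ ih₁ ih₂ =>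
          have h := J.add_mem ih₁ ih₂
          convert h using 1
          simp only [map_add, add_mul, mul_add, TensorProduct.add_tmul]
          abel
    have hψE : ψ (TensorProduct.map SC.symm.toLinearMap LinearMap.id E) = 1 := by
      have heq : ψ ∘ₗ TensorProduct.map SC.symm.toLinearMap LinearMap.id
          = C.val.toLinearMap ∘ₗ SC.symm.toLinearMap ∘ₗ muSC SC := by
        apply TensorProduct.ext'
        intro x y
        simp [hψ, incl, muSC, hsymm]
      have := congrArg (fun f => f E) heq
      simp only [LinearMap.comp_apply] at this
      rw [this, hn2, hSCone.symm]
      simp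
    have := key (TensorProduct.map SC.symm.toLinearMap LinearMap.id E)
    rw [hψE, one_mul] at this
    exact this
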